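/- For ℓ > 0 define T(ℓ) = (1/ℓ)·(π/2 − arctan(sinh(ℓ/2))). Then for every fixed t > 0 the geodesic curvature and length of the collar circles at parameter T(ℓ) − t satisfy: lim_{ℓ → 0⁺} sin(ℓ (T(ℓ) − t)) = 1 and lim_{ℓ → 0⁺} ℓ / cos(ℓ (T(ℓ) − t)) = 1/(t + ½). -/

import Mathlib

/-!
Writing `l * (T(l) - t) = π/2 - x(l)` with `x(l) = arctan (sinh (l/2)) + l t`, the curvature is
`cos (x l)` and the length is `l / sin (x l)`. Since `x` is smooth with `x 0 = 0` and
`x' 0 = 1/2 + t`, the first tends to `cos 0 = 1` and the second to the inverse of the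
derivative of `sin ∘ x` at `0`, which is `1/2 + t`.
-/

open Real Filter Topology

noncomputable section

/-- Half-length of the collar of a closed geodesic of length `ℓ`:
`T(ℓ) = (1/ℓ)·arccot(sinh(ℓ/2)) = (1/ℓ)·(π/2 − arctan(sinh(ℓ/2)))`. -/
def collarT (l : ℝ) : ℝ := (1 / l) * (π / 2 - Real.arctan (Real.sinh (l / 2)))

theorem HasDerivAt.tendsto_self_div_of_apply_zero {f : ℝ → ℝ} {a : ℝ} (hf : HasDerivAt f a 0)
    (hf0 : f 0 = 0) (ha : a ≠ 0) : Tendsto (fun x => x / f x) (𝓝[≠] 0) (𝓝 a⁻¹) := by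
  have hslope : Tendsto (fun x => x⁻¹ * f x) (𝓝[≠] 0) (𝓝 a) := by
    simpa [hf0] using hasDerivAt_iff_tendsto_slope_zero.mp hf
  refine (hslope.inv₀ ha).congr fun x => ?_
  rw [mul_inv, inv_inv, div_eq_mul_inv]

def collarCoangle (t l : ℝ) : ℝ := arctan (sinh (l / 2)) + l * t

theorem collarCoangle_zero (t : ℝ) : collarCoangle t 0 = 0 := by
  simp [collarCoangle]

theorem mul_collarT_sub {l : ℝ} (t : ℝ) (hl : l ≠ 0) :
    l * (collarT l - t) = π / 2 - collarCoangle t l := by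
  simp only [collarT, collarCoangle]
  field_simp
  ring

theorem hasDerivAt_collarCoangle (t : ℝ) : HasDerivAt (collarCoangle t) (1 / 2 + t) 0 := by
  have hhalf : HasDerivAt (fun l : ℝ => l / 2) (1 / 2) 0 := by
    simpa using (hasDerivAt_id (0 : ℝ)).div_const 2
  have hsinh := (hasDerivAt_sinh _).comp 0 hhalf
  have harctan := (hasDerivAt_arctan _).comp 0 hsinh
  have hlin : HasDerivAt (fun l : ℝ => l * t) t 0 := by
    simpa using (hasDerivAt_id (0 : ℝ)).mul_const t
  exact (harctan.add hlin).congr_deriv (by simp)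

/-- Asymptotics of geodesic curvature `sin(ℓt)` and length `ℓ/cos(ℓt)` of the collar circles
at parameter `t = ±(T(ℓ) − t)` as `ℓ → 0⁺`. -/
theorem stmt19 (t : ℝ) (ht : 0 < t) :
    Tendsto (fun l : ℝ => Real.sin (l * (collarT l - t))) (nhdsWithin 0 (Set.Ioi 0)) (nhds 1) ∧
    Tendsto (fun l : ℝ => l / Real.cos (l * (collarT l - t))) (nhdsWithin 0 (Set.Ioi 0))
      (nhds (1 / (t + 1 / 2))) := by
  have hx := hasDerivAt_collarCoangle t
  have hangle : ∀ᶠ l in 𝓝[>] 0, l * (collarT l - t) = π / 2 - collarCoangle t l := by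
    filter_upwards [self_mem_nhdsWithin] with l hl using mul_collarT_sub t hl.out.ne'
  have hpos : 𝓝[>] (0 : ℝ) ≤ 𝓝[≠] 0 := nhdsWithin_mono 0 fun l hl => ne_of_gt hl
  constructor
  · have hcos : Tendsto (fun l => cos (collarCoangle t l)) (𝓝 0) (𝓝 1) := by
      simpa [collarCoangle_zero, Function.comp_def] using
        (continuous_cos.tendsto _).comp hx.continuousAt.tendsto
    refine (hcos.mono_left nhdsWithin_le_nhds).congr' ?_
    filter_upwards [hangle] with l hl
    rw [hl, sin_pi_div_two_sub]
  · have hsin : HasDerivAt (fun l => sin (collarCoangle t l)) (1 / 2 + t) 0 := by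
      simpa [collarCoangle_zero, Function.comp_def] using (hasDerivAt_sin _).comp 0 hx
    have hlim := (hsin.tendsto_self_div_of_apply_zero (by simp [collarCoangle_zero])
      (by positivity)).mono_left hpos
    rw [one_div, add_comm]
    refine hlim.congr' ?_
    filter_upwards [hangle] with l hl
    rw [hl, cos_pi_div_two_sub]
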